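/- arXiv:2307.01928 — 2 statements merged into one kernel-verified Lean document; each statement's English description precedes it below -/
import Mathlib

section
/- Let X be a measurable space and Y a finite nonempty label set. Let (X_1, A_1),…,(X_{N+1}, A_{N+1}) be i.i.d. random pairs where X_i takes values in X and A_i is a nonempty subset of Y (the set of acceptable labels), and let f̂ : X → Y → ℝ be a measurable confidence function. Define the nonconformity scores s_i = 1 − max_{y ∈ A_i} f̂(X_i)_y. Fix ε ∈ (0,1), set k = ⌈(N+1)(1−ε)⌉, assume k ≤ N, and let q̂ be the k-th smallest value of the multiset {s_1,…,s_N}. Define the prediction set C(x) = {y ∈ Y : f̂(x)_y ≥ 1 − q̂}. Then P(C(X_{N+1}) ∩ A_{N+1} ≠ ∅) ≥ 1 − ε, i.e., with probability at least 1 − ε the prediction set contains at least one acceptable label. -/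
open MeasureTheory ProbabilityTheory
open scoped ENNReal

/-- The k-th smallest value (1-indexed) of the multiset of values of `v`. -/
noncomputable def kthSmallest {N : ℕ} (v : Fin N → ℝ) (k : ℕ) : ℝ :=
  ((List.ofFn v : Multiset ℝ).sort (· ≤ ·)).getD (k - 1) 0

section Aux

lemma aux_sorted_getElem_mono (l : List ℝ) (hl : l.Pairwise (· ≤ ·)) {i j : ℕ}
    (hij : i ≤ j) (hj : j < l.length) : l[i]'(lt_of_le_of_lt hij hj) ≤ l[j] := by
  rcases Nat.eq_or_lt_of_le hij with rfl | h
  · exact le_refl _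
  · exact List.pairwise_iff_getElem.1 hl i j (by omega) hj h

lemma aux_sorted_le_getD_iff (l : List ℝ) (hl : l.Pairwise (· ≤ ·)) (k : ℕ) (hk1 : 1 ≤ k)
    (hk : k ≤ l.length) (x : ℝ) :
    x ≤ l.getD (k-1) 0 ↔ l.countP (fun a => decide (a < x)) ≤ k - 1 := by
  have hlt : k - 1 < l.length := by omega
  have hgetD : l.getD (k-1) 0 = l[k-1] := List.getD_eq_getElem l 0 hlt
  rw [hgetD]
  constructor
  · intro hx
    have hsplit := List.countP_append (p := fun a => decide (a < x)) (l₁ := l.take (k-1)) (l₂ := l.drop (k-1))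
    rw [List.take_append_drop] at hsplit
    have hdrop : (l.drop (k-1)).countP (fun a => decide (a < x)) = 0 := by
      rw [List.countP_eq_zero]
      intro a ha
      obtain ⟨i, hi, rfl⟩ := List.mem_iff_getElem.1 ha
      rw [List.length_drop] at hi
      rw [List.getElem_drop]
      simp only [decide_eq_true_eq, not_lt]
      exact le_trans hx (aux_sorted_getElem_mono l hl (by omega) (by omega))
    have htake : (l.take (k-1)).countP (fun a => decide (a < x)) ≤ k - 1 := by
      calc (l.take (k-1)).countP _ ≤ (l.take (k-1)).length := List.countP_le_length
        _ ≤ k - 1 := by rw [List.length_take]; omega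
    omega
  · intro hc
    by_contra hx
    push_neg at hx
    have hsplit := List.countP_append (p := fun a => decide (a < x)) (l₁ := l.take k) (l₂ := l.drop k)
    rw [List.take_append_drop] at hsplit
    have htake : (l.take k).countP (fun a => decide (a < x)) = k := by
      have hall : ∀ a ∈ l.take k, (fun a => decide (a < x)) a = true := by
        intro a ha
        obtain ⟨i, hi, rfl⟩ := List.mem_iff_getElem.1 ha
        rw [List.length_take] at hi
        rw [List.getElem_take]
        simp only [decide_eq_true_eq]
        exact lt_of_le_of_lt (aux_sorted_getElem_mono l hl (by omega : i ≤ k-1) hlt) hx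
      rw [List.countP_eq_length.2 hall, List.length_take]
      omega
    omega

lemma aux_sorted_countP_le_getD (l : List ℝ) (hl : l.Pairwise (· ≤ ·)) (k : ℕ) (hk1 : 1 ≤ k)
    (hk : k ≤ l.length) :
    k ≤ l.countP (fun a => decide (a ≤ l.getD (k-1) 0)) := by
  have hlt : k - 1 < l.length := by omega
  have hgetD : l.getD (k-1) 0 = l[k-1] := List.getD_eq_getElem l 0 hlt
  have hsplit := List.countP_append (p := fun a => decide (a ≤ l.getD (k-1) 0)) (l₁ := l.take k) (l₂ := l.drop k)
  rw [List.take_append_drop] at hsplit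
  have htake : (l.take k).countP (fun a => decide (a ≤ l.getD (k-1) 0)) = k := by
    have hall : ∀ a ∈ l.take k, (fun a => decide (a ≤ l.getD (k-1) 0)) a = true := by
      intro a ha
      obtain ⟨i, hi, rfl⟩ := List.mem_iff_getElem.1 ha
      rw [List.length_take] at hi
      rw [List.getElem_take, hgetD]
      simp only [decide_eq_true_eq]
      exact aux_sorted_getElem_mono l hl (by omega : i ≤ k-1) hlt
    rw [List.countP_eq_length.2 hall, List.length_take]
    omega
  omega

lemma aux_countP_ofFn {n : ℕ} (v : Fin n → ℝ) (p : ℝ → Prop) [DecidablePred p] :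
    (List.ofFn v).countP (fun a => decide (p a)) =
      (Finset.univ.filter (fun i => p (v i))).card := by
  rw [List.ofFn_eq_map, List.countP_map]
  rw [Fin.univ_def]
  simp [Finset.filter, Multiset.countP, List.countP_eq_length_filter]
  rfl

lemma aux_countP_sort_eq {n : ℕ} (v : Fin n → ℝ) (p : ℝ → Prop) [DecidablePred p] :
    ((List.ofFn v : Multiset ℝ).sort (· ≤ ·)).countP (fun a => decide (p a)) =
      (Finset.univ.filter (fun i => p (v i))).card := by
  have h := Multiset.sort_eq (α := ℝ) (List.ofFn v) (· ≤ ·)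
  have h2 : Multiset.countP p ↑(Multiset.sort (α := ℝ) (List.ofFn v) (· ≤ ·))
      = Multiset.countP p (List.ofFn v : Multiset ℝ) := by rw [h]
  rw [Multiset.coe_countP, Multiset.coe_countP] at h2
  rw [h2, aux_countP_ofFn]

lemma aux_length_sort_ofFn {n : ℕ} (v : Fin n → ℝ) :
    ((List.ofFn v : Multiset ℝ).sort (· ≤ ·)).length = n := by
  rw [Multiset.length_sort]
  simp

lemma aux_le_kthSmallest_iff {N : ℕ} (v : Fin N → ℝ) (k : ℕ) (hk1 : 1 ≤ k) (hk : k ≤ N)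
    (x : ℝ) :
    x ≤ kthSmallest v k ↔ (Finset.univ.filter (fun i => v i < x)).card ≤ k - 1 := by
  rw [kthSmallest, aux_sorted_le_getD_iff _ (Multiset.pairwise_sort _ _) k hk1
    (by rw [aux_length_sort_ofFn]; exact hk), aux_countP_sort_eq v (fun a => a < x)]

lemma aux_rank_count {M : ℕ} (k : ℕ) (hk1 : 1 ≤ k) (hk : k ≤ M) (w : Fin M → ℝ) :
    k ≤ (Finset.univ.filter
      (fun j => (Finset.univ.filter (fun i => w i < w j)).card ≤ k - 1)).card := by
  set q := kthSmallest w k with hq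
  have hSk : k ≤ (Finset.univ.filter (fun j => w j ≤ q)).card := by
    have h0 := aux_sorted_countP_le_getD ((List.ofFn w : Multiset ℝ).sort (· ≤ ·))
      (Multiset.pairwise_sort _ _) k hk1 (by rw [aux_length_sort_ofFn]; exact hk)
    have hqq : ((List.ofFn w : Multiset ℝ).sort (· ≤ ·)).getD (k-1) 0 = q := rfl
    rw [hqq] at h0
    rwa [aux_countP_sort_eq w (fun a => a ≤ q)] at h0
  refine le_trans hSk (Finset.card_le_card ?_)
  intro j hj
  simp only [Finset.mem_filter, Finset.mem_univ, true_and] at hj ⊢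
  have hsub : (Finset.univ.filter (fun i => w i < w j)) ⊆
      (Finset.univ.filter (fun i => w i < q)) := by
    intro i hi
    simp only [Finset.mem_filter, Finset.mem_univ, true_and] at hi ⊢
    exact lt_of_lt_of_le hi hj
  refine le_trans (Finset.card_le_card hsub) ?_
  exact (aux_le_kthSmallest_iff w k hk1 hk q).1 (le_refl q)

lemma aux_filter_perm_card {n : ℕ} (σ : Equiv.Perm (Fin n)) (p : Fin n → Prop)
    [DecidablePred p] :
    (Finset.univ.filter (fun i => p (σ i))).card = (Finset.univ.filter p).card := by
  rw [Finset.card_filter, Finset.card_filter]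
  exact Equiv.sum_comp σ (fun i => if p i then 1 else 0)

lemma aux_filter_castSucc_card {n : ℕ} (p : Fin (n+1) → Prop) [DecidablePred p]
    (hlast : ¬ p (Fin.last n)) :
    (Finset.univ.filter p).card = (Finset.univ.filter (fun i : Fin n => p i.castSucc)).card := by
  rw [Finset.card_filter, Finset.card_filter, Fin.sum_univ_castSucc]
  simp [hlast]

/-- The joint law of any permutation of an i.i.d. family is the product of the marginals. -/
lemma aux_map_perm_eq_pi {Ω : Type*} [MeasureSpace Ω] [IsProbabilityMeasure (ℙ : Measure Ω)]
    {n : ℕ} (t : Fin n → Ω → ℝ) (hm : ∀ i, Measurable (t i))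
    (hind : iIndepFun t ℙ)
    (hid : ∀ i j, IdentDistrib (t i) (t j) ℙ ℙ) (σ : Equiv.Perm (Fin n)) :
    Measure.map (fun ω (i : Fin n) => t (σ i) ω) ℙ = Measure.pi (fun i => Measure.map (t i) ℙ) := by
  haveI : ∀ i, IsProbabilityMeasure (Measure.map (t i) (ℙ : Measure Ω)) :=
    fun i => Measure.isProbabilityMeasure_map (hm i).aemeasurable
  refine (Measure.pi_eq fun B hB => ?_).symm
  have hvec : Measurable (fun ω (i : Fin n) => t (σ i) ω) :=
    measurable_pi_lambda _ (fun i => hm (σ i))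
  rw [Measure.map_apply hvec (MeasurableSet.univ_pi hB)]
  have hpre : (fun ω (i : Fin n) => t (σ i) ω) ⁻¹' (Set.univ.pi B)
      = ⋂ j ∈ Finset.univ, t j ⁻¹' B (σ.symm j) := by
    ext ω
    simp only [Set.mem_preimage, Set.mem_pi, Set.mem_univ, true_implies, Set.mem_iInter,
      Finset.mem_univ, forall_const]
    constructor
    · intro h j
      have := h (σ.symm j)
      simpa using this
    · intro h i
      have := h (σ i)
      simpa using this
  rw [hpre, hind.measure_inter_preimage_eq_mul Finset.univ
    (sets := fun j => B (σ.symm j)) (fun i _ => hB _)]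
  have hre : ∏ j : Fin n, ℙ (t j ⁻¹' B (σ.symm j))
      = ∏ i : Fin n, ℙ (t (σ i) ⁻¹' B (σ.symm (σ i))) :=
    (Equiv.prod_comp σ (fun j => ℙ (t j ⁻¹' B (σ.symm j)))).symm
  rw [hre]
  refine Finset.prod_congr rfl fun i _ => ?_
  rw [Equiv.symm_apply_apply]
  rw [← Measure.map_apply (hm (σ i)) (hB i), (hid (σ i) i).map_eq,
    Measure.map_apply (hm i) (hB i), ← Measure.map_apply (hm i) (hB i)]

end Aux

/-- **Single-step conformal prediction with multiple acceptable options.**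
Given i.i.d. pairs `(Xᵢ, Aᵢ)` where `Aᵢ ⊆ 𝒴` is a nonempty set of acceptable labels,
nonconformity scores `sᵢ = 1 - max_{y ∈ Aᵢ} f̂(Xᵢ)_y`, `k = ⌈(N+1)(1-ε)⌉ ≤ N`, and `q̂` the
k-th smallest calibration score, the prediction set `C(x) = {y | f̂(x)_y ≥ 1 - q̂}` intersects
the acceptable set of the test point with probability at least `1 - ε`. -/
theorem multiple_acceptable_options_coverage
    {Ω : Type*} [MeasureSpace Ω] [IsProbabilityMeasure (ℙ : Measure Ω)]
    {𝒳 : Type*} [MeasurableSpace 𝒳]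
    {𝒴 : Type*} [Fintype 𝒴] [Nonempty 𝒴] [MeasurableSpace 𝒴] [MeasurableSingletonClass 𝒴]
    [MeasurableSpace (Finset 𝒴)] [MeasurableSingletonClass (Finset 𝒴)]
    (N : ℕ) (X : Fin (N + 1) → Ω → 𝒳) (A : Fin (N + 1) → Ω → Finset 𝒴)
    (hA : ∀ i ω, (A i ω).Nonempty)
    (hmeas : ∀ i, Measurable (fun ω => (X i ω, A i ω)))
    (hindep : iIndepFun (fun i ω => (X i ω, A i ω)) ℙ)
    (hident : ∀ i j, IdentDistrib (fun ω => (X i ω, A i ω)) (fun ω => (X j ω, A j ω)) ℙ ℙ)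
    (f : 𝒳 → 𝒴 → ℝ) (hf : ∀ y, Measurable (fun x => f x y))
    (ε : ℝ) (hε : ε ∈ Set.Ioo (0 : ℝ) 1)
    (k : ℕ) (hk : k = ⌈((N : ℝ) + 1) * (1 - ε)⌉₊) (hkN : k ≤ N)
    (s : Fin (N + 1) → Ω → ℝ)
    (hs : ∀ i ω, s i ω = 1 - (A i ω).sup' (hA i ω) (fun y => f (X i ω) y))
    (qhat : Ω → ℝ) (hq : ∀ ω, qhat ω = kthSmallest (fun i : Fin N => s i.castSucc ω) k)
    (C : Ω → Set 𝒴) (hC : ∀ ω, C ω = {y | f (X (Fin.last N) ω) y ≥ 1 - qhat ω}) :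
    ℙ {ω | (C ω ∩ ↑(A (Fin.last N) ω)).Nonempty} ≥ ENNReal.ofReal (1 - ε) := by
  obtain ⟨hε0, hε1⟩ := hε
  -- k ≥ 1
  have hk1 : 1 ≤ k := by
    rw [hk]
    exact Nat.ceil_pos.2 (mul_pos (by positivity) (by linarith))
  -- the score as a measurable function of the pair
  set g : 𝒳 × Finset 𝒴 → ℝ :=
    fun p => if h : p.2.Nonempty then 1 - p.2.sup' h (fun y => f p.1 y) else 0 with hg
  have hgmeas : Measurable g := by
    apply measurable_from_prod_countable_left
    intro a
    by_cases ha : a.Nonempty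
    · simp only [hg, dif_pos ha]
      have hm1 : Measurable (a.sup' ha fun y => fun x => f x y) :=
        Finset.measurable_sup' ha (fun y _ => hf y)
      have heq : (a.sup' ha fun y => fun x => f x y)
          = fun x => a.sup' ha fun y => f x y := by
        funext x
        exact Finset.sup'_apply ha _ x
      rw [heq] at hm1
      exact measurable_const.sub hm1
    · simp only [hg, dif_neg ha]
      exact measurable_const
  have hsg : ∀ i ω, s i ω = g (X i ω, A i ω) := by
    intro i ω
    simp only [hg, dif_pos (hA i ω)]
    exact hs i ω
  have hsfun : ∀ i, s i = g ∘ (fun ω => (X i ω, A i ω)) := fun i => funext (hsg i)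
  have hsmeas : ∀ i, Measurable (s i) := by
    intro i
    rw [hsfun i]
    exact hgmeas.comp (hmeas i)
  have hsind : iIndepFun s ℙ := by
    have h := hindep.comp (fun _ => g) (fun _ => hgmeas)
    have he : s = (fun i => g ∘ (fun ω => (X i ω, A i ω))) := by
      funext i; exact hsfun i
    exact he ▸ h
  have hsid : ∀ i j, IdentDistrib (s i) (s j) ℙ ℙ := by
    intro i j
    have h := (hident i j).comp hgmeas
    rw [← hsfun i, ← hsfun j] at h
    exact h
  -- target measurable set on the product space
  classical
  set D : Set (Fin (N+1) → ℝ) :=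
    {v | (Finset.univ.filter (fun i => v i < v (Fin.last N))).card ≤ k - 1} with hD
  have hT : Measurable (fun v : Fin (N+1) → ℝ =>
      (Finset.univ.filter (fun i => v i < v (Fin.last N))).card) := by
    have : (fun v : Fin (N+1) → ℝ =>
        (Finset.univ.filter (fun i => v i < v (Fin.last N))).card)
        = fun v => ∑ i : Fin (N+1), if v i < v (Fin.last N) then 1 else 0 := by
      funext v; exact Finset.card_filter _ _
    rw [this]
    refine Finset.measurable_sum _ (fun i _ => ?_)
    exact Measurable.ite (measurableSet_lt (measurable_pi_apply i)
      (measurable_pi_apply (Fin.last N))) measurable_const measurable_const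
  have hDmeas : MeasurableSet D := hT (show MeasurableSet {m : ℕ | m ≤ k - 1} from trivial)
  -- the events
  set ν : Measure (Fin (N+1) → ℝ) := Measure.pi (fun i => Measure.map (s i) ℙ) with hν
  set E : Fin (N+1) → Set Ω :=
    fun j => (fun ω (i : Fin (N+1)) => s (Equiv.swap j (Fin.last N) i) ω) ⁻¹' D with hE
  have hvecmeas : ∀ j : Fin (N+1),
      Measurable (fun ω (i : Fin (N+1)) => s (Equiv.swap j (Fin.last N) i) ω) :=
    fun j => measurable_pi_lambda _ (fun i => hsmeas _)
  have hPE : ∀ j, ℙ (E j) = ν D := by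
    intro j
    rw [hE]
    rw [← Measure.map_apply (hvecmeas j) hDmeas,
      aux_map_perm_eq_pi s hsmeas hsind hsid (Equiv.swap j (Fin.last N))]
  have hEmeas : ∀ j, MeasurableSet (E j) := fun j => (hvecmeas j) hDmeas
  -- membership characterization of E j
  have hmemE : ∀ j ω, ω ∈ E j ↔
      (Finset.univ.filter (fun i => s i ω < s j ω)).card ≤ k - 1 := by
    intro j ω
    simp only [hE, Set.mem_preimage, hD, Set.mem_setOf_eq]
    simp only [Equiv.swap_apply_right]
    have hcard := aux_filter_perm_card (Equiv.swap j (Fin.last N)) (fun i => s i ω < s j ω)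
    rw [hcard]
  -- pointwise counting bound
  have hpoint : ∀ ω, (k : ℝ≥0∞) ≤ ∑ j : Fin (N+1), (E j).indicator (fun _ => 1) ω := by
    intro ω
    have hcount := aux_rank_count k hk1 (by omega : k ≤ N + 1) (fun i => s i ω)
    have heq : ∑ j : Fin (N+1), (E j).indicator (fun _ => (1:ℝ≥0∞)) ω
        = ((Finset.univ.filter (fun j : Fin (N+1) =>
            (Finset.univ.filter (fun i => s i ω < s j ω)).card ≤ k - 1)).card : ℝ≥0∞) := by
      rw [Finset.card_filter]
      push_cast
      refine Finset.sum_congr rfl fun j _ => ?_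
      by_cases hj : ω ∈ E j
      · rw [Set.indicator_of_mem hj, if_pos ((hmemE j ω).1 hj)]
      · rw [Set.indicator_of_notMem hj, if_neg (fun h => hj ((hmemE j ω).2 h))]
    rw [heq]
    exact_mod_cast Nat.cast_le.2 hcount
  -- sum of probabilities
  have hsum : (k : ℝ≥0∞) ≤ ((N : ℝ≥0∞) + 1) * ν D := by
    have h1 : (k : ℝ≥0∞) ≤ ∑ j : Fin (N+1), ℙ (E j) := by
      have h2 : ∑ j : Fin (N+1), ℙ (E j)
          = ∫⁻ ω, ∑ j : Fin (N+1), (E j).indicator (fun _ => (1:ℝ≥0∞)) ω ∂ℙ := by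
        rw [lintegral_finset_sum _ (fun j _ => (measurable_const.indicator (hEmeas j)))]
        refine Finset.sum_congr rfl fun j _ => ?_
        rw [lintegral_indicator_const (hEmeas j), one_mul]
      rw [h2]
      calc (k : ℝ≥0∞) = ∫⁻ _, (k : ℝ≥0∞) ∂ℙ := by simp
        _ ≤ _ := lintegral_mono (fun ω => hpoint ω)
    calc (k : ℝ≥0∞) ≤ ∑ j : Fin (N+1), ℙ (E j) := h1
      _ = ((N : ℝ≥0∞) + 1) * ν D := by
          simp only [hPE]
          rw [Finset.sum_const, Finset.card_univ, Fintype.card_fin, nsmul_eq_mul]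
          push_cast
          ring
  -- identify the event with E (last)
  have hevent : {ω | (C ω ∩ ↑(A (Fin.last N) ω)).Nonempty} = E (Fin.last N) := by
    ext ω
    simp only [Set.mem_setOf_eq]
    rw [hmemE (Fin.last N) ω]
    have hsup : (C ω ∩ ↑(A (Fin.last N) ω)).Nonempty
        ↔ s (Fin.last N) ω ≤ qhat ω := by
      constructor
      · rintro ⟨y, hyC, hyA⟩
        rw [hC ω] at hyC
        simp only [Set.mem_setOf_eq, ge_iff_le] at hyC
        have hle : 1 - qhat ω ≤ (A (Fin.last N) ω).sup' (hA _ _)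
            (fun y => f (X (Fin.last N) ω) y) :=
          (Finset.le_sup'_iff _).2 ⟨y, by simpa using hyA, hyC⟩
        rw [hs]
        linarith
      · intro hle
        rw [hs] at hle
        have : 1 - qhat ω ≤ (A (Fin.last N) ω).sup' (hA _ _)
            (fun y => f (X (Fin.last N) ω) y) := by linarith
        obtain ⟨y, hyA, hy⟩ := (Finset.le_sup'_iff _).1 this
        exact ⟨y, by rw [hC ω]; exact hy, by simpa using hyA⟩
    rw [hsup, hq ω,
      aux_le_kthSmallest_iff (fun i : Fin N => s i.castSucc ω) k hk1 hkN (s (Fin.last N) ω)]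
    rw [aux_filter_castSucc_card (fun i : Fin (N+1) => s i ω < s (Fin.last N) ω)
      (by simp)]
  rw [hevent, hPE]
  -- final arithmetic
  have hkge : ((N : ℝ) + 1) * (1 - ε) ≤ (k : ℝ) := by
    rw [hk]; exact Nat.le_ceil _
  have hN1 : ((N : ℝ≥0∞) + 1) ≠ 0 := by simp [add_eq_zero]
  have hN1' : ((N : ℝ≥0∞) + 1) ≠ ⊤ := by
    simp [ENNReal.add_ne_top]
  rw [ge_iff_le, ← ENNReal.mul_le_mul_iff_right hN1 hN1']
  refine le_trans ?_ hsum
  have hcast : ((N : ℝ≥0∞) + 1) = ENNReal.ofReal ((N : ℝ) + 1) := by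
    rw [ENNReal.ofReal_add (by positivity) zero_le_one]
    simp
  rw [hcast, ← ENNReal.ofReal_mul (by positivity)]
  calc ENNReal.ofReal (((N : ℝ) + 1) * (1 - ε)) ≤ ENNReal.ofReal (k : ℝ) :=
        ENNReal.ofReal_le_ofReal hkge
    _ = (k : ℝ≥0∞) := ENNReal.ofReal_natCast k
end

section
/- Let X be a measurable space and Y a finite nonempty label set. Let (X_1,Y_1),…,(X_{N+1},Y_{N+1}) be i.i.d. random pairs with values in X × Y, let f̂ : X → Y → ℝ be a measurable confidence function, and define the nonconformity scores s_i = 1 − f̂(X_i)_{Y_i}. Assume the scores are almost surely distinct, i.e., P(s_i = s_j) = 0 for all i ≠ j. Fix ε ∈ (0,1), set k = ⌈(N+1)(1−ε)⌉, assume k ≤ N, let q̂ be the k-th smallest value of the multiset {s_1,…,s_N}, and define C(x) = {y ∈ Y : f̂(x)_y ≥ 1 − q̂}. Then P(Y_{N+1} ∈ C(X_{N+1})) ≤ k/(N+1) ≤ 1 − ε + 1/(N+1), so the conformal coverage guarantee is tight up to 1/(N+1). -/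
open MeasureTheory ProbabilityTheory
open scoped ENNReal

/-- For a sorted list, `x ≤ l[m]` iff at most `m` elements of `l` are `< x`. -/
lemma sorted_le_get_iff {l : List ℝ} (hl : l.Pairwise (· ≤ ·)) {m : ℕ} (hm : m < l.length)
    (x : ℝ) :
    x ≤ l.get ⟨m, hm⟩ ↔ (l.filter (fun a => decide (a < x))).length ≤ m := by
  constructor
  · intro h
    have hsplit : l = l.take m ++ l.drop m := (List.take_append_drop m l).symm
    have hdropf : (l.drop m).filter (fun a => decide (a < x)) = [] := by
      rw [List.filter_eq_nil_iff]
      intro a ha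
      have hdrop : l.drop m = l.get ⟨m, hm⟩ :: l.drop (m + 1) := by
        rw [List.get_eq_getElem]
        exact (List.drop_eq_getElem_cons hm)
      rw [hdrop] at ha
      rcases List.mem_cons.1 ha with rfl | ha'
      · simpa using not_lt.2 h
      · have hmem : l.get ⟨m, hm⟩ ∈ l.take (m + 1) := by
          have hlen : m < (l.take (m + 1)).length := by
            simp [List.length_take]; omega
          have : (l.take (m + 1)).get ⟨m, hlen⟩ = l.get ⟨m, hm⟩ := by
            simp [List.get_eq_getElem, List.getElem_take]
          rw [← this]
          exact List.get_mem _ _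
        have := hl.rel_of_mem_take_of_mem_drop hmem ha'
        simpa using not_lt.2 (h.trans this)
    have hcalc : l.filter (fun a => decide (a < x))
        = (l.take m).filter (fun a => decide (a < x))
          ++ (l.drop m).filter (fun a => decide (a < x)) := by
      conv_lhs => rw [hsplit]
      rw [List.filter_append]
    rw [hcalc, hdropf, List.append_nil]
    calc ((l.take m).filter (fun a => decide (a < x))).length
        ≤ (l.take m).length := List.length_filter_le _ _
      _ ≤ m := by simp [List.length_take]
  · intro h
    by_contra hlt
    push_neg at hlt
    have hall : ∀ a ∈ l.take (m + 1), a < x := by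
      intro a ha
      have hmemd : l.get ⟨m, hm⟩ ∈ l.drop m := by
        rw [List.get_eq_getElem, List.drop_eq_getElem_cons hm]
        exact List.mem_cons_self
      rw [List.take_succ] at ha
      rcases List.mem_append.1 ha with ha' | ha'
      · exact lt_of_le_of_lt (hl.rel_of_mem_take_of_mem_drop ha' hmemd) hlt
      · have : l[m]? = some (l.get ⟨m, hm⟩) := by
          rw [List.getElem?_eq_getElem hm]; simp
        rw [this] at ha'
        simp at ha'
        subst ha'
        exact hlt
    have hfil : (l.take (m + 1)).filter (fun a => decide (a < x)) = l.take (m + 1) := by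
      rw [List.filter_eq_self]
      intro a ha; simpa using hall a ha
    have hsub : ((l.take (m + 1)).filter (fun a => decide (a < x))).Sublist
        (l.filter (fun a => decide (a < x))) := (List.take_sublist _ _).filter _
    have := hsub.length_le
    rw [hfil] at this
    have hlen : (l.take (m + 1)).length = m + 1 := by
      simp [List.length_take]; omega
    omega

lemma length_filter_ofFn {N : ℕ} (v : Fin N → ℝ) (p : ℝ → Prop) [DecidablePred p] :
    ((List.ofFn v).filter (fun a => decide (p a))).length
      = (Finset.univ.filter (fun i => p (v i))).card := by
  classical
  have h1 : ((List.ofFn v).filter (fun a => decide (p a))).length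
      = ((List.finRange N).filter (fun i => decide (p (v i)))).length := by
    rw [List.ofFn_eq_map, ← List.countP_eq_length_filter, List.countP_map,
      List.countP_eq_length_filter]
    rfl
  rw [h1]
  rfl

lemma le_kthSmallest_iff {N k : ℕ} (v : Fin N → ℝ) (hk1 : 1 ≤ k) (hkN : k ≤ N) (x : ℝ) :
    x ≤ kthSmallest v k ↔ (Finset.univ.filter (fun i => v i < x)).card ≤ k - 1 := by
  classical
  set l := ((List.ofFn v : Multiset ℝ).sort (· ≤ ·)) with hl
  have hsorted : l.Pairwise (· ≤ ·) := Multiset.pairwise_sort ..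
  have hlen : l.length = N := by
    rw [hl, Multiset.length_sort]
    simp
  have hm : k - 1 < l.length := by omega
  have hgetD : kthSmallest v k = l.get ⟨k - 1, hm⟩ := by
    rw [kthSmallest]
    rw [List.getD_eq_getElem _ _ hm]
    simp [hl]
  have hperm : l.Perm (List.ofFn v) := by
    have := Multiset.sort_eq (s := (List.ofFn v : Multiset ℝ)) (r := (· ≤ ·))
    exact Multiset.coe_eq_coe.1 this
  rw [hgetD, sorted_le_get_iff hsorted hm x,
    (hperm.filter _).length_eq, length_filter_ofFn v (fun a => a < x)]

lemma rank_card_eq {n : ℕ} (w : Fin n → ℝ) (hw : Function.Injective w) (k : ℕ)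
    (hk1 : 1 ≤ k) (hkn : k ≤ n) :
    (Finset.univ.filter
      (fun j => (Finset.univ.filter (fun i => w i ≤ w j)).card ≤ k)).card = k := by
  classical
  set r : Fin n → ℕ := fun j => (Finset.univ.filter (fun i => w i ≤ w j)).card with hr
  have hmono : ∀ j j', w j < w j' → r j < r j' := by
    intro j j' hlt
    apply Finset.card_lt_card
    constructor
    · intro i hi
      simp only [Finset.mem_filter, Finset.mem_univ, true_and] at hi ⊢
      exact hi.trans hlt.le
    · intro hsub
      have : j' ∈ Finset.univ.filter (fun i => w i ≤ w j') := by simp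
      have := hsub this
      simp only [Finset.mem_filter, Finset.mem_univ, true_and] at this
      exact absurd this (not_le.2 hlt)
  have hinj : Function.Injective r := by
    intro j j' h
    by_contra hne
    rcases lt_trichotomy (w j) (w j') with h1 | h1 | h1
    · exact absurd h (hmono j j' h1).ne
    · exact hne (hw h1)
    · exact absurd h.symm (hmono j' j h1).ne
  have himg : Finset.univ.image r = Finset.Icc 1 n := by
    apply Finset.eq_of_subset_of_card_le
    · intro m hm
      simp only [Finset.mem_image, Finset.mem_univ, true_and] at hm
      obtain ⟨j, rfl⟩ := hm
      simp only [Finset.mem_Icc]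
      constructor
      · exact Finset.card_pos.2 ⟨j, by simp⟩
      · exact (Finset.card_filter_le _ _).trans (by simp)
    · rw [Finset.card_image_of_injective _ hinj]
      simp
  calc (Finset.univ.filter (fun j => r j ≤ k)).card
      = ((Finset.univ.filter (fun j => r j ≤ k)).image r).card :=
        (Finset.card_image_of_injective _ hinj).symm
    _ = ((Finset.univ.image r).filter (fun m => m ≤ k)).card := by
        rw [Finset.filter_image]
    _ = ((Finset.Icc 1 n).filter (fun m => m ≤ k)).card := by rw [himg]
    _ = (Finset.Icc 1 k).card := by
        congr 1
        ext m
        simp only [Finset.mem_filter, Finset.mem_Icc]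
        omega
    _ = k := by simp

section MainProb

variable {Ω : Type*} [MeasureSpace Ω] [IsProbabilityMeasure (ℙ : Measure Ω)]

lemma rank_event_measure_eq {n : ℕ} (s : Fin n → Ω → ℝ) (hsm : ∀ i, Measurable (s i))
    (hindep : iIndepFun s ℙ)
    (hident : ∀ i j, (ℙ : Measure Ω).map (s i) = (ℙ : Measure Ω).map (s j))
    (hdist : ∀ i j, i ≠ j → ℙ {ω | s i ω = s j ω} = 0)
    (k : ℕ) (hk1 : 1 ≤ k) (hkn : k ≤ n) (j0 : Fin n) :
    ℙ {ω | (Finset.univ.filter (fun i => s i ω ≤ s j0 ω)).card ≤ k}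
      = (k : ℝ≥0∞) / (n : ℝ≥0∞) := by
  classical
  set T : Ω → (Fin n → ℝ) := fun ω i => s i ω with hT
  have hTm : Measurable T := measurable_pi_lambda _ hsm
  set ν : Measure ℝ := (ℙ : Measure Ω).map (s j0) with hν
  have hνprob : IsProbabilityMeasure ν := Measure.isProbabilityMeasure_map (hsm j0).aemeasurable
  -- joint law is the product measure
  have hTpi : (ℙ : Measure Ω).map T = Measure.pi (fun _ : Fin n => ν) := by
    refine (Measure.pi_eq ?_).symm
    intro B hB
    rw [Measure.map_apply hTm (MeasurableSet.univ_pi hB)]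
    have hpre : T ⁻¹' Set.pi Set.univ B = ⋂ i, s i ⁻¹' B i := by
      ext ω
      simp only [Set.mem_preimage, Set.mem_pi, Set.mem_univ, true_implies, Set.mem_iInter]
      exact Iff.rfl
    rw [hpre, hindep.meas_iInter (fun i => ⟨B i, hB i, rfl⟩)]
    refine Finset.prod_congr rfl fun i _ => ?_
    rw [← Measure.map_apply (hsm i) (hB i), hident i j0]
  set μ : Measure (Fin n → ℝ) := Measure.pi (fun _ : Fin n => ν) with hμ
  -- counting functions and rank events
  set c : Fin n → (Fin n → ℝ) → ℕ :=
    fun j w => (Finset.univ.filter (fun i => w i ≤ w j)).card with hc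
  have hcm : ∀ j, Measurable (c j) := by
    intro j
    have : c j = fun w => ∑ i : Fin n, if w i ≤ w j then 1 else 0 := by
      funext w
      show (Finset.univ.filter (fun i => w i ≤ w j)).card = _
      rw [Finset.card_filter]
    rw [this]
    exact Finset.measurable_sum _ fun i _ =>
      Measurable.ite (measurableSet_le (measurable_pi_apply i) (measurable_pi_apply j))
        measurable_const measurable_const
  set A : Fin n → Set (Fin n → ℝ) := fun j => {w | c j w ≤ k} with hA
  have hAm : ∀ j, MeasurableSet (A j) :=
    fun j => (hcm j) (Set.to_countable (Set.Iic k)).measurableSet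
  -- permutation invariance
  have hperm : ∀ σ : Equiv.Perm (Fin n), μ.map (fun w => w ∘ σ) = μ := by
    intro σ
    have hcomp : Measurable (fun w : Fin n → ℝ => w ∘ σ) :=
      measurable_pi_lambda _ fun i => measurable_pi_apply (σ i)
    rw [hμ]
    refine (Measure.pi_eq ?_).symm
    intro B hB
    rw [Measure.map_apply hcomp (MeasurableSet.univ_pi hB)]
    have hpre : (fun w : Fin n → ℝ => w ∘ σ) ⁻¹' Set.pi Set.univ B
        = Set.pi Set.univ (fun i => B (σ.symm i)) := by
      ext w
      simp only [Set.mem_preimage, Set.mem_pi, Set.mem_univ, forall_true_left,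
        Function.comp_apply, true_implies]
      constructor
      · intro h i
        simpa using h (σ.symm i)
      · intro h i
        have := h (σ i)
        rwa [Equiv.symm_apply_apply] at this
    rw [hpre, Measure.pi_pi]
    exact Equiv.prod_comp σ.symm (fun i => ν (B i))
  -- all rank events have the same measure
  have hAeq : ∀ j, μ (A j) = μ (A j0) := by
    intro j
    set σ : Equiv.Perm (Fin n) := Equiv.swap j0 j with hσ
    have hApre : A j = (fun w => w ∘ σ) ⁻¹' (A j0) := by
      ext w
      have hσj0 : σ j0 = j := Equiv.swap_apply_left _ _
      have hkey : c j0 (w ∘ σ) = c j w := by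
        show (Finset.univ.filter (fun i => w (σ i) ≤ w (σ j0))).card
          = (Finset.univ.filter (fun i => w i ≤ w j)).card
        rw [hσj0]
        rw [← Finset.card_image_of_injective
          (Finset.univ.filter (fun i => w (σ i) ≤ w j)) σ.injective]
        congr 1
        ext i
        simp only [Finset.mem_image, Finset.mem_filter, Finset.mem_univ, true_and]
        constructor
        · rintro ⟨a, ha, rfl⟩; exact ha
        · intro hi; exact ⟨σ.symm i, by simpa using hi, by simp⟩
      constructor
      · intro hwj
        have h2 : c j0 (w ∘ σ) ≤ k := by rw [hkey]; exact hwj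
        exact h2
      · intro hwj
        have h2 : c j0 (w ∘ σ) ≤ k := hwj
        rw [hkey] at h2
        exact h2
    have hcomp : Measurable (fun w : Fin n → ℝ => w ∘ σ) :=
      measurable_pi_lambda _ fun i => measurable_pi_apply (σ i)
    rw [hApre, ← Measure.map_apply hcomp (hAm j0), hperm σ]
  -- the a.s. distinctness set
  set D : Set (Fin n → ℝ) := {w | ∀ i j, i ≠ j → w i ≠ w j} with hD
  have hDm : MeasurableSet D := by
    have : D = ⋂ (p : Fin n × Fin n), {w : Fin n → ℝ | p.1 ≠ p.2 → w p.1 ≠ w p.2} := by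
      ext w
      simp only [hD, Set.mem_setOf_eq, Set.mem_iInter, Prod.forall]
    rw [this]
    refine MeasurableSet.iInter fun p => ?_
    by_cases hp : p.1 = p.2
    · simp [hp]
    · have : {w : Fin n → ℝ | p.1 ≠ p.2 → w p.1 ≠ w p.2}
          = {w : Fin n → ℝ | w p.1 = w p.2}ᶜ := by
        ext w; simp [hp]
      rw [this]
      exact (measurableSet_eq_fun (measurable_pi_apply p.1) (measurable_pi_apply p.2)).compl
  have hDc : μ Dᶜ = 0 := by
    have hsub : Dᶜ ⊆ ⋃ (p : Fin n × Fin n),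
        {w : Fin n → ℝ | p.1 ≠ p.2 ∧ w p.1 = w p.2} := by
      intro w hw
      simp only [hD, Set.mem_compl_iff, Set.mem_setOf_eq, not_forall] at hw
      obtain ⟨i, j, hij, hww⟩ := hw
      exact Set.mem_iUnion.2 ⟨(i, j), hij, not_not.1 hww⟩
    refine measure_mono_null hsub (measure_iUnion_null fun p => ?_)
    by_cases hp : p.1 = p.2
    · have : {w : Fin n → ℝ | p.1 ≠ p.2 ∧ w p.1 = w p.2} = ∅ := by
        ext w; simp [hp]
      simp [this]
    · have hset : {w : Fin n → ℝ | p.1 ≠ p.2 ∧ w p.1 = w p.2}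
          = {w : Fin n → ℝ | w p.1 = w p.2} := by
        ext w; simp [hp]
      rw [hset, ← hTpi,
        Measure.map_apply hTm
          (measurableSet_eq_fun (measurable_pi_apply p.1) (measurable_pi_apply p.2))]
      have : T ⁻¹' {w : Fin n → ℝ | w p.1 = w p.2} = {ω | s p.1 ω = s p.2 ω} := rfl
      rw [this]
      exact hdist p.1 p.2 hp
  have hDfull : μ D = 1 := by
    have : μ D = μ Set.univ := measure_congr (Filter.EventuallyEq.symm
      ((MeasureTheory.ae_eq_univ).2 hDc)).symm
    rw [this]
    have : IsProbabilityMeasure μ := by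
      rw [hμ]; infer_instance
    exact measure_univ
  -- the counting identity: ∑ j, μ (A j ∩ D) = k
  have hsum : ∑ j : Fin n, μ (A j ∩ D) = (k : ℝ≥0∞) := by
    have hptwise : ∀ w, (∑ j : Fin n, (A j ∩ D).indicator (1 : (Fin n → ℝ) → ℝ≥0∞) w)
        = D.indicator (fun _ => (k : ℝ≥0∞)) w := by
      intro w
      by_cases hw : w ∈ D
      · have hwk : (Finset.univ.filter (fun j => c j w ≤ k)).card = k := by
          have hwinj : Function.Injective w := by
            intro a b hab
            by_contra hne
            exact (hw a b hne) hab
          exact rank_card_eq w hwinj k hk1 (by simpa using hkn)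
        have : ∀ j, (A j ∩ D).indicator (1 : (Fin n → ℝ) → ℝ≥0∞) w
            = if c j w ≤ k then 1 else 0 := by
          intro j
          by_cases hj : c j w ≤ k
          · rw [if_pos hj]
            have hjA : w ∈ A j := hj
            exact Set.indicator_of_mem (Set.mem_inter hjA hw) (1 : (Fin n → ℝ) → ℝ≥0∞)
          · rw [if_neg hj]
            exact Set.indicator_of_notMem (fun hmem => hj hmem.1) (1 : (Fin n → ℝ) → ℝ≥0∞)
        rw [Finset.sum_congr rfl fun j _ => this j, Finset.sum_boole,
          Set.indicator_of_mem hw]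
        exact_mod_cast hwk
      · have : ∀ j, (A j ∩ D).indicator (1 : (Fin n → ℝ) → ℝ≥0∞) w = 0 := by
          intro j
          apply Set.indicator_of_notMem
          simp [Set.mem_inter_iff, hw]
        rw [Finset.sum_congr rfl fun j _ => this j]
        simp [Set.indicator_of_notMem hw]
    calc ∑ j : Fin n, μ (A j ∩ D)
        = ∑ j : Fin n, ∫⁻ w, (A j ∩ D).indicator (1 : (Fin n → ℝ) → ℝ≥0∞) w ∂μ := by
          refine Finset.sum_congr rfl fun j _ => ?_
          rw [lintegral_indicator_one ((hAm j).inter hDm)]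
      _ = ∫⁻ w, ∑ j : Fin n, (A j ∩ D).indicator (1 : (Fin n → ℝ) → ℝ≥0∞) w ∂μ := by
          rw [lintegral_finset_sum]
          intro j _
          exact measurable_const.indicator ((hAm j).inter hDm)
      _ = ∫⁻ w, D.indicator (fun _ => (k : ℝ≥0∞)) w ∂μ := by
          congr 1; funext w; exact hptwise w
      _ = (k : ℝ≥0∞) * μ D := by
          rw [lintegral_indicator_const hDm]
      _ = (k : ℝ≥0∞) := by rw [hDfull, mul_one]
  -- conclude
  have hAint : ∀ j, μ (A j ∩ D) = μ (A j) := fun j => measure_inter_conull hDc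
  have hsum' : (n : ℝ≥0∞) * μ (A j0) = (k : ℝ≥0∞) := by
    calc (n : ℝ≥0∞) * μ (A j0) = ∑ _j : Fin n, μ (A j0) := by
          rw [Finset.sum_const, Finset.card_univ, Fintype.card_fin, nsmul_eq_mul]
      _ = ∑ j : Fin n, μ (A j ∩ D) := by
          refine Finset.sum_congr rfl fun j _ => ?_
          rw [hAint j, hAeq j]
      _ = (k : ℝ≥0∞) := hsum
  have hn0 : (n : ℝ≥0∞) ≠ 0 := by
    have : 0 < n := lt_of_lt_of_le hk1 hkn
    exact_mod_cast Nat.pos_iff_ne_zero.1 this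
  have hμA : μ (A j0) = (k : ℝ≥0∞) / (n : ℝ≥0∞) := by
    rw [ENNReal.eq_div_iff hn0 (ENNReal.natCast_ne_top n)]
    exact hsum'
  have hev : {ω | (Finset.univ.filter (fun i => s i ω ≤ s j0 ω)).card ≤ k}
      = T ⁻¹' (A j0) := rfl
  rw [hev, ← Measure.map_apply hTm (hAm j0), hTpi]
  exact hμA

end MainProb

/-- **Tightness of the conformal coverage guarantee.**
In the setting of split conformal prediction with i.i.d. data and almost surely distinct
nonconformity scores, the coverage probability is at most `k/(N+1) ≤ 1 - ε + 1/(N+1)`,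
where `k = ⌈(N+1)(1-ε)⌉`. -/
theorem conformal_coverage_upper_bound
    {Ω : Type*} [MeasureSpace Ω] [IsProbabilityMeasure (ℙ : Measure Ω)]
    {𝒳 : Type*} [MeasurableSpace 𝒳]
    {𝒴 : Type*} [Fintype 𝒴] [Nonempty 𝒴] [MeasurableSpace 𝒴] [MeasurableSingletonClass 𝒴]
    (N : ℕ) (X : Fin (N + 1) → Ω → 𝒳) (Y : Fin (N + 1) → Ω → 𝒴)
    (hmeas : ∀ i, Measurable (fun ω => (X i ω, Y i ω)))
    (hindep : iIndepFun (fun i ω => (X i ω, Y i ω)) ℙ)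
    (hident : ∀ i j, IdentDistrib (fun ω => (X i ω, Y i ω)) (fun ω => (X j ω, Y j ω)) ℙ ℙ)
    (f : 𝒳 → 𝒴 → ℝ) (hf : ∀ y, Measurable (fun x => f x y))
    (s : Fin (N + 1) → Ω → ℝ) (hs : ∀ i ω, s i ω = 1 - f (X i ω) (Y i ω))
    (hdistinct : ∀ i j, i ≠ j → ℙ {ω | s i ω = s j ω} = 0)
    (ε : ℝ) (hε : ε ∈ Set.Ioo (0 : ℝ) 1)
    (k : ℕ) (hk : k = ⌈((N : ℝ) + 1) * (1 - ε)⌉₊) (hkN : k ≤ N)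
    (qhat : Ω → ℝ) (hq : ∀ ω, qhat ω = kthSmallest (fun i : Fin N => s i.castSucc ω) k)
    (C : Ω → Set 𝒴) (hC : ∀ ω, C ω = {y | f (X (Fin.last N) ω) y ≥ 1 - qhat ω}) :
    ℙ {ω | Y (Fin.last N) ω ∈ C ω} ≤ (k : ℝ≥0∞) / ((N : ℝ≥0∞) + 1) ∧
    (k : ℝ≥0∞) / ((N : ℝ≥0∞) + 1)
      ≤ ENNReal.ofReal (1 - ε) + 1 / ((N : ℝ≥0∞) + 1) := by
  classical
  obtain ⟨hε0, hε1⟩ := hε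
  have hN1 : (0 : ℝ) < (N : ℝ) + 1 := by positivity
  have harg : (0 : ℝ) < ((N : ℝ) + 1) * (1 - ε) := by
    apply mul_pos hN1
    linarith
  have hk1 : 1 ≤ k := by
    rw [hk]
    exact Nat.ceil_pos.2 harg
  -- measurability of the scores
  have hg : Measurable (fun p : 𝒳 × 𝒴 => 1 - f p.1 p.2) := by
    have hfm : Measurable (fun p : 𝒳 × 𝒴 => f p.1 p.2) :=
      measurable_from_prod_countable_left (fun y => hf y)
    exact measurable_const.sub hfm
  have hseq : ∀ i, s i
      = (fun p : 𝒳 × 𝒴 => 1 - f p.1 p.2) ∘ (fun ω => (X i ω, Y i ω)) := by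
    intro i; funext ω; simp [hs]
  have hsm : ∀ i, Measurable (s i) := fun i => by
    rw [hseq i]; exact hg.comp (hmeas i)
  have hsindep : iIndepFun s (ℙ : Measure Ω) := by
    have h2 := hindep.comp
      (fun _ : Fin (N + 1) => (fun p : 𝒳 × 𝒴 => 1 - f p.1 p.2)) (fun _ => hg)
    have h3 : (fun i : Fin (N + 1) =>
        (fun p : 𝒳 × 𝒴 => 1 - f p.1 p.2) ∘ ((fun i ω => (X i ω, Y i ω)) i)) = s := by
      funext i ω; simp [hs]
    rwa [h3] at h2
  have hsident : ∀ i j, (ℙ : Measure Ω).map (s i) = (ℙ : Measure Ω).map (s j) := by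
    intro i j
    rw [hseq i, hseq j]
    exact ((hident i j).comp hg).map_eq
  have hmain := rank_event_measure_eq s hsm hsindep hsident hdistinct k hk1
    (by omega) (Fin.last N)
  -- identify the coverage event with the rank event up to a null set
  have hEiff : ∀ ω, (∀ i j, i ≠ j → s i ω ≠ s j ω) →
      ((Y (Fin.last N) ω ∈ C ω) ↔
        (Finset.univ.filter (fun j => s j ω ≤ s (Fin.last N) ω)).card ≤ k) := by
    intro ω hω
    have h1 : (Y (Fin.last N) ω ∈ C ω) ↔ s (Fin.last N) ω ≤ qhat ω := by
      rw [hC]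
      simp only [Set.mem_setOf_eq, ge_iff_le]
      rw [hs]
      constructor <;> intro h <;> linarith
    have h2 : s (Fin.last N) ω ≤ qhat ω ↔
        (Finset.univ.filter
          (fun i : Fin N => s i.castSucc ω < s (Fin.last N) ω)).card ≤ k - 1 := by
      rw [hq]
      exact le_kthSmallest_iff _ hk1 hkN _
    have h3 : (Finset.univ.filter
          (fun i : Fin N => s i.castSucc ω < s (Fin.last N) ω)).card
        = (Finset.univ.filter
          (fun i : Fin N => s i.castSucc ω ≤ s (Fin.last N) ω)).card := by
      congr 1
      apply Finset.filter_congr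
      intro i _
      have hne : s i.castSucc ω ≠ s (Fin.last N) ω :=
        hω _ _ (Fin.castSucc_lt_last i).ne
      simp [lt_iff_le_and_ne, hne]
    have h4 : (Finset.univ.filter (fun j => s j ω ≤ s (Fin.last N) ω)).card
        = (Finset.univ.filter
          (fun i : Fin N => s i.castSucc ω ≤ s (Fin.last N) ω)).card + 1 := by
      rw [Finset.card_filter, Finset.card_filter, Fin.sum_univ_castSucc]
      simp
    rw [h1, h2, h3, h4]
    omega
  have hG : ∀ᵐ ω ∂(ℙ : Measure Ω), ∀ i j, i ≠ j → s i ω ≠ s j ω := by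
    rw [ae_iff]
    have hsub : {ω | ¬ ∀ i j, i ≠ j → s i ω ≠ s j ω} ⊆
        ⋃ p : Fin (N + 1) × Fin (N + 1), {ω | p.1 ≠ p.2 ∧ s p.1 ω = s p.2 ω} := by
      intro ω hω
      simp only [Set.mem_setOf_eq] at hω
      push_neg at hω
      obtain ⟨i, j, hij, hww⟩ := hω
      exact Set.mem_iUnion.2 ⟨(i, j), hij, hww⟩
    refine measure_mono_null hsub (measure_iUnion_null fun p => ?_)
    by_cases hp : p.1 = p.2
    · have : {ω | p.1 ≠ p.2 ∧ s p.1 ω = s p.2 ω} = ∅ := by ext ω; simp [hp]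
      simp [this]
    · exact measure_mono_null (fun ω hω => hω.2) (hdistinct p.1 p.2 hp)
  have hEF : ℙ {ω | Y (Fin.last N) ω ∈ C ω}
      = ℙ {ω | (Finset.univ.filter (fun j => s j ω ≤ s (Fin.last N) ω)).card ≤ k} := by
    apply measure_congr
    rw [Filter.eventuallyEq_set]
    filter_upwards [hG] with ω hω
    exact hEiff ω hω
  have hcast : ((N + 1 : ℕ) : ℝ≥0∞) = (N : ℝ≥0∞) + 1 := by push_cast; ring
  constructor
  · rw [hEF, hmain, hcast]
  · -- arithmetic bound
    have hkle : (k : ℝ) ≤ ((N : ℝ) + 1) * (1 - ε) + 1 := by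
      rw [hk]
      exact (Nat.ceil_lt_add_one harg.le).le
    have hreal : (k : ℝ) / ((N : ℝ) + 1) ≤ (1 - ε) + 1 / ((N : ℝ) + 1) := by
      rw [div_le_iff₀ hN1]
      calc (k : ℝ) ≤ ((N : ℝ) + 1) * (1 - ε) + 1 := hkle
        _ = ((1 - ε) + 1 / ((N : ℝ) + 1)) * ((N : ℝ) + 1) := by
            field_simp
    have h1 : (k : ℝ≥0∞) / ((N : ℝ≥0∞) + 1)
        = ENNReal.ofReal ((k : ℝ) / ((N : ℝ) + 1)) := by
      rw [ENNReal.ofReal_div_of_pos hN1, ENNReal.ofReal_natCast,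
        ENNReal.ofReal_add (by positivity) zero_le_one, ENNReal.ofReal_natCast,
        ENNReal.ofReal_one]
    have h2 : (1 : ℝ≥0∞) / ((N : ℝ≥0∞) + 1)
        = ENNReal.ofReal ((1 : ℝ) / ((N : ℝ) + 1)) := by
      rw [ENNReal.ofReal_div_of_pos hN1, ENNReal.ofReal_one,
        ENNReal.ofReal_add (by positivity) zero_le_one, ENNReal.ofReal_natCast,
        ENNReal.ofReal_one]
    rw [h1, h2, ← ENNReal.ofReal_add (by linarith) (by positivity)]
    exact ENNReal.ofReal_le_ofReal hreal
end
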